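/- arXiv:2204.00583 — 3 statements merged into one kernel-verified Lean document; each statement's English description precedes it below -/
import Mathlib

section
/- Let α, β, γ > 0, c ≤ 0, and F : ℝ → ℝ differentiable with 0 ≤ F ≤ 1 and F' ≥ 0. Then for every (A,R) in D₁ = {(A,R) ∈ [0,1]² : A + R ≤ 1}, the divergence of the vector field (A,R) ↦ (-β·A + α·F(c·A+Q)·(1-A-R), -γ·R + β·A) is strictly negative. (This is the inhibitory case of the no-cycles criterion: c ≤ 0 automatically gives negative divergence without any condition on sup F'.) -/
lemma hasDerivAt_neg_mul_add_mul_comp_affine_mul_sub {F : ℝ → ℝ} {d : ℝ} (α β c Q R A : ℝ)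
    (hF : HasDerivAt F d (c * A + Q)) :
    HasDerivAt (fun a => -β * a + α * F (c * a + Q) * (1 - a - R))
      (-β - α * F (c * A + Q) + α * c * d * (1 - A - R)) A := by
  have hinput : HasDerivAt (fun a => c * a + Q) c A := by
    simpa using ((hasDerivAt_id A).const_mul c).add_const Q
  have hgain : HasDerivAt (fun a => α * F (c * a + Q)) (α * (d * c)) A :=
    (hF.comp A hinput).const_mul α
  have hsupply : HasDerivAt (fun a => 1 - a - R) (-1) A := by
    simpa using ((hasDerivAt_id A).const_sub 1).sub_const R
  exact (((hasDerivAt_id' A).const_mul (-β)).add (hgain.mul hsupply)).congr_deriv (by ring)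

lemma neg_sub_add_mul_add_neg_lt_zero {α β γ c f d S : ℝ} (hα : 0 ≤ α) (hβ : 0 < β) (hγ : 0 < γ)
    (hc : c ≤ 0) (hf : 0 ≤ f) (hd : 0 ≤ d) (hS : 0 ≤ S) :
    -β - α * f + α * c * d * S + -γ < 0 := by
  have hfeedback : α * c * d * S ≤ 0 :=
    mul_nonpos_of_nonpos_of_nonneg
      (mul_nonpos_of_nonpos_of_nonneg (mul_nonpos_of_nonneg_of_nonpos hα hc) hd) hS
  have hloss : 0 ≤ α * f := mul_nonneg hα hf
  linarith

theorem mean_field_divergence_inhibitory_general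
    (α β γ c Q : ℝ) (hα : 0 < α) (hβ : 0 < β) (hγ : 0 < γ) (hc : c ≤ 0)
    (F F' : ℝ → ℝ) (hF : ∀ y, HasDerivAt F (F' y) y)
    (hF0 : ∀ y, 0 ≤ F y) (hF'0 : ∀ y, 0 ≤ F' y)
    (A R : ℝ) (hAR : A + R ≤ 1) :
    HasDerivAt (fun a => -β * a + α * F (c * a + Q) * (1 - a - R))
      (-β - α * F (c * A + Q) + α * c * F' (c * A + Q) * (1 - A - R)) A ∧
    HasDerivAt (fun r => -γ * r + β * A) (-γ) R ∧
    (-β - α * F (c * A + Q) + α * c * F' (c * A + Q) * (1 - A - R)) + (-γ) < 0 :=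
  ⟨hasDerivAt_neg_mul_add_mul_comp_affine_mul_sub α β c Q R A (hF _),
    by simpa using ((hasDerivAt_id R).const_mul (-γ)).add_const (β * A),
    neg_sub_add_mul_add_neg_lt_zero hα.le hβ hγ hc (hF0 _) (hF'0 _) (by linarith)⟩

/-- Inhibitory case (`c ≤ 0`): the divergence of the single-population mean-field vector
field is strictly negative everywhere on `D₁`, with no condition on `sup F'`. -/
theorem mean_field_divergence_inhibitory
    (α β γ c Q : ℝ) (hα : 0 < α) (hβ : 0 < β) (hγ : 0 < γ) (hc : c ≤ 0)
    (F F' : ℝ → ℝ) (hF : ∀ y, HasDerivAt F (F' y) y)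
    (hF0 : ∀ y, 0 ≤ F y) (hF1 : ∀ y, F y ≤ 1) (hF'0 : ∀ y, 0 ≤ F' y)
    (A R : ℝ) (hA : A ∈ Set.Icc (0:ℝ) 1) (hR : R ∈ Set.Icc (0:ℝ) 1) (hAR : A + R ≤ 1) :
    HasDerivAt (fun a => -β * a + α * F (c * a + Q) * (1 - a - R))
      (-β - α * F (c * A + Q) + α * c * F' (c * A + Q) * (1 - A - R)) A ∧
    HasDerivAt (fun r => -γ * r + β * A) (-γ) R ∧
    (-β - α * F (c * A + Q) + α * c * F' (c * A + Q) * (1 - A - R)) + (-γ) < 0 :=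
  mean_field_divergence_inhibitory_general α β γ c Q hα hβ hγ hc F F' hF hF0 hF'0 A R hAR
end

section
/- By the Bendixson–Dulac criterion, if β + γ > α·c·sup F' (with α, β, γ > 0, F differentiable, nondecreasing, 0 ≤ F ≤ 1, F' bounded), then the planar system A' = -β·A + α·F(c·A+Q)·(1-A-R), R' = -γ·R + β·A has no nonconstant periodic orbit contained in the simply connected region D₁ = {(A,R) : 0 ≤ A, 0 ≤ R, A + R ≤ 1}. -/
/-!
Instead of integrating the divergence over the region enclosed by the orbit, we use a
Liénard-type Lyapunov function. Along a solution, `v = βA - γR` is `R'`, and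
`V = v²/2 + βγR²/2 - ∫₀^R g` satisfies `V' = v (β φ(A, R) - g(R)) - (β + γ) v²`, where
`φ(a, r) = α F(c a + Q) (1 - a - r)`. The divergence bound says exactly that `a ↦ φ(a, r) - K a`
is antitone on `[0, 1 - r]` for `K = max 0 (α c sup F')`. Taking for `g(r)` the value of
`β φ(a, r) - K v` at the point `a` of `[0, 1 - r]` closest to `γ r / β`, where `v` changes sign,
gives `V' ≤ -(β + γ - K) v² ≤ 0`. On a periodic orbit `V` is periodic and antitone, hence
constant, so `v ≡ 0` and the orbit is a single point.
-/

open Set Function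

theorem Antitone.eq_of_periodic {Y : ℝ → ℝ} {T : ℝ} (hY : Antitone Y) (hper : Periodic Y T)
    (hT : 0 < T) (a b : ℝ) : Y a = Y b := by
  have hle : ∀ a b, Y a ≤ Y b := fun a b => by
    obtain ⟨n, hn⟩ := exists_nat_ge ((b - a) / T)
    calc Y a = Y (a + n * T) := (hper.nat_mul n a).symm
      _ ≤ Y b := hY (by rw [div_le_iff₀ hT] at hn; linarith)
  exact le_antisymm (hle a b) (hle b a)

theorem Function.Periodic.eq_zero_of_hasDerivAt_nonpos {Y E : ℝ → ℝ} {T : ℝ}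
    (hper : Periodic Y T) (hT : 0 < T) (hY : ∀ t, HasDerivAt Y (E t) t) (hE : ∀ t, E t ≤ 0)
    (t : ℝ) : E t = 0 := by
  have hconst : Y = fun _ => Y 0 :=
    funext fun s => (antitone_of_hasDerivAt_nonpos hY hE).eq_of_periodic hper hT s 0
  exact (hY t).unique (hconst ▸ hasDerivAt_const t (Y 0))

theorem AntitoneOn.sub_mul_sub_min_nonpos {h : ℝ → ℝ} {lo hi x₀ x : ℝ}
    (hh : AntitoneOn h (Icc lo hi)) (hlo : lo ≤ x₀) (hx : x ∈ Icc lo hi) :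
    (h x - h (min x₀ hi)) * (x - x₀) ≤ 0 := by
  have hmin : min x₀ hi ∈ Icc lo hi := ⟨le_min hlo (hx.1.trans hx.2), min_le_right _ _⟩
  rcases le_or_gt x x₀ with hxx₀ | hx₀x
  · have := hh hx hmin (le_min hxx₀ hx.2)
    exact mul_nonpos_of_nonneg_of_nonpos (by linarith) (by linarith)
  · rw [min_eq_left (hx₀x.le.trans hx.2)]
    have := hh ⟨hlo, hx₀x.le.trans hx.2⟩ hx hx₀x.le
    exact mul_nonpos_of_nonpos_of_nonneg (by linarith) (by linarith)

noncomputable section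

namespace MeanField

variable (α β γ c Q K : ℝ) (F : ℝ → ℝ)

def recruitment (a r : ℝ) : ℝ := α * F (c * a + Q) * (1 - a - r)

theorem hasDerivAt_recruitment {F' : ℝ → ℝ} (hF : ∀ y, HasDerivAt F (F' y) y) (a r : ℝ) :
    HasDerivAt (fun a => recruitment α c Q F a r)
      (α * c * F' (c * a + Q) * (1 - a - r) - α * F (c * a + Q)) a := by
  have hB : HasDerivAt (fun a => F (c * a + Q)) (F' (c * a + Q) * c) a :=
    (hF _).comp a (((hasDerivAt_id a).const_mul c).add_const Q |>.congr_deriv (mul_one c))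
  have hS : HasDerivAt (fun a : ℝ => 1 - a - r) (-1) a := by
    simpa using ((hasDerivAt_id a).const_sub 1).sub_const r
  exact ((hB.const_mul α).mul hS).congr_deriv (by ring)

theorem antitoneOn_recruitment_sub {F' : ℝ → ℝ} {M r : ℝ} (hα : 0 ≤ α)
    (hF : ∀ y, HasDerivAt F (F' y) y) (hF0 : ∀ y, 0 ≤ F y) (hF'0 : ∀ y, 0 ≤ F' y)
    (hM : ∀ y, F' y ≤ M) (hK0 : 0 ≤ K) (hKM : α * c * M ≤ K) (hr : 0 ≤ r) :
    AntitoneOn (fun a => recruitment α c Q F a r - K * a) (Icc 0 (1 - r)) := by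
  refine antitoneOn_of_hasDerivWithinAt_nonpos (convex_Icc _ _) ?_
    (fun a _ => (((hasDerivAt_recruitment α c Q F hF a r).sub
      ((hasDerivAt_id a).const_mul K)).hasDerivWithinAt)) ?_
  · exact fun a _ => ((hasDerivAt_recruitment α c Q F hF a r).continuousAt.sub
      (continuousAt_const.mul continuousAt_id)).continuousWithinAt
  · intro a ha
    rw [interior_Icc] at ha
    set f := F' (c * a + Q)
    have hf0 : 0 ≤ f := hF'0 _
    have hfM : f ≤ M := hM _
    have hS0 : 0 ≤ 1 - a - r := by linarith [ha.2]
    have hS1 : 1 - a - r ≤ 1 := by linarith [ha.1]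
    have hslope : α * c * f * (1 - a - r) ≤ K := by
      rcases le_or_gt 0 c with hc | hc
      · calc α * c * f * (1 - a - r) ≤ α * c * f * 1 := by gcongr
          _ ≤ α * c * M := by rw [mul_one]; gcongr
          _ ≤ K := hKM
      · have : α * c * f * (1 - a - r) ≤ 0 :=
          mul_nonpos_of_nonpos_of_nonneg
            (mul_nonpos_of_nonpos_of_nonneg (mul_nonpos_of_nonneg_of_nonpos hα hc.le) hf0) hS0
        linarith
    have := mul_nonneg hα (hF0 (c * a + Q))
    simp only [mul_one]
    linarith

def comparison (r : ℝ) : ℝ :=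
  β * (recruitment α c Q F (min (γ * r / β) (1 - r)) r - K * min (γ * r / β) (1 - r)) + K * γ * r

theorem continuous_comparison (hF : Continuous F) : Continuous (comparison α β γ c Q K F) := by
  unfold comparison recruitment
  fun_prop

def lyapunov (g : ℝ → ℝ) (a r : ℝ) : ℝ :=
  (β * a - γ * r) ^ 2 / 2 + β * γ * (r ^ 2 / 2) - ∫ u in (0 : ℝ)..r, g u

theorem hasDerivAt_lyapunov {g : ℝ → ℝ} (hg : Continuous g) {A R : ℝ → ℝ} {t : ℝ}
    (hA : HasDerivAt A (-β * A t + recruitment α c Q F (A t) (R t)) t)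
    (hR : HasDerivAt R (-γ * R t + β * A t) t) :
    HasDerivAt (fun t => lyapunov β γ g (A t) (R t))
      ((β * A t - γ * R t) * (β * recruitment α c Q F (A t) (R t) - g (R t))
        - (β + γ) * (β * A t - γ * R t) ^ 2) t := by
  have hv := (hA.const_mul β).sub (hR.const_mul γ)
  have hG := (hg.integral_hasStrictDerivAt 0 (R t)).hasDerivAt.comp t hR
  refine ((((hv.pow 2).div_const 2).add (((hR.pow 2).div_const 2).const_mul (β * γ))).sub hG)
    |>.congr_deriv ?_
  simp only [Pi.sub_apply]
  push_cast
  ring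

theorem mul_sub_comparison_le {F' : ℝ → ℝ} {M a r : ℝ} (hα : 0 ≤ α) (hβ : 0 < β) (hγ : 0 ≤ γ)
    (hF : ∀ y, HasDerivAt F (F' y) y) (hF0 : ∀ y, 0 ≤ F y) (hF'0 : ∀ y, 0 ≤ F' y)
    (hM : ∀ y, F' y ≤ M) (hK0 : 0 ≤ K) (hKM : α * c * M ≤ K)
    (ha : 0 ≤ a) (hr : 0 ≤ r) (har : a + r ≤ 1) :
    (β * a - γ * r) * (β * recruitment α c Q F a r - comparison α β γ c Q K F r)
      ≤ K * (β * a - γ * r) ^ 2 := by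
  set ψ := fun a => recruitment α c Q F a r - K * a
  set a₀ := min (γ * r / β) (1 - r)
  have hψ : (ψ a - ψ a₀) * (β * a - γ * r) ≤ 0 := by
    have hv : β * a - γ * r = β * (a - γ * r / β) := by field_simp
    rw [hv, mul_left_comm]
    exact mul_nonpos_of_nonneg_of_nonpos hβ.le
      ((antitoneOn_recruitment_sub α c Q K F hα hF hF0 hF'0 hM hK0 hKM hr).sub_mul_sub_min_nonpos
        (by positivity) ⟨ha, by linarith⟩)
  have hsplit : (β * a - γ * r) * (β * recruitment α c Q F a r - comparison α β γ c Q K F r)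
      = β * ((ψ a - ψ a₀) * (β * a - γ * r)) + K * (β * a - γ * r) ^ 2 := by
    simp only [comparison, ψ, a₀]
    ring
  rw [hsplit]
  linarith [mul_nonpos_of_nonneg_of_nonpos hβ.le hψ]

theorem eq_of_mul_sub_mul_eq_zero {A R : ℝ → ℝ} (hβ : β ≠ 0)
    (hR : ∀ t, HasDerivAt R (-γ * R t + β * A t) t) (hv : ∀ t, β * A t - γ * R t = 0)
    (t s : ℝ) : A t = A s ∧ R t = R s := by
  have hRc := is_const_of_deriv_eq_zero (fun t => (hR t).differentiableAt)
    (fun t => by rw [(hR t).deriv]; linarith [hv t])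
  refine ⟨mul_left_cancel₀ hβ ?_, hRc t s⟩
  have hvt := hv t
  rw [hRc t s] at hvt
  linarith [hv s]

end MeanField

end

open MeanField

theorem mean_field_no_periodic_orbit_general
    (α β γ c Q M : ℝ) (hα : 0 < α) (hβ : 0 < β) (hγ : 0 < γ)
    (F F' : ℝ → ℝ) (hF : ∀ y, HasDerivAt F (F' y) y)
    (hF0 : ∀ y, 0 ≤ F y)
    (hF'0 : ∀ y, 0 ≤ F' y) (hMsup : IsLUB (Set.range F') M)
    (hcond : β + γ > α * c * M)
    (A R : ℝ → ℝ)
    (hAode : ∀ t, HasDerivAt A (-β * A t + α * F (c * A t + Q) * (1 - A t - R t)) t)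
    (hRode : ∀ t, HasDerivAt R (-γ * R t + β * A t) t)
    (hdom : ∀ t, 0 ≤ A t ∧ 0 ≤ R t ∧ A t + R t ≤ 1)
    (T : ℝ) (hT : 0 < T) (hper : ∀ t, A (t + T) = A t ∧ R (t + T) = R t) :
    ∀ t s : ℝ, A t = A s ∧ R t = R s := by
  set K := max 0 (α * c * M)
  have hKlt : K < β + γ := max_lt (by positivity) hcond
  have hFc : Continuous F := continuous_iff_continuousAt.2 fun y => (hF y).continuousAt
  have hY t := hasDerivAt_lyapunov α β γ c Q F (continuous_comparison α β γ c Q K F hFc)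
    (hAode t) (hRode t)
  have hdiss t : (β * A t - γ * R t) * (β * recruitment α c Q F (A t) (R t)
      - comparison α β γ c Q K F (R t)) ≤ K * (β * A t - γ * R t) ^ 2 :=
    mul_sub_comparison_le α β γ c Q K F hα.le hβ hγ.le hF hF0 hF'0
      (fun y => hMsup.1 ⟨y, rfl⟩) (le_max_left _ _) (le_max_right _ _) (hdom t).1 (hdom t).2.1
      (hdom t).2.2
  have hperV : Periodic (fun t => lyapunov β γ (comparison α β γ c Q K F) (A t) (R t)) T :=
    fun t => by simp only [hper t]
  have hE0 := hperV.eq_zero_of_hasDerivAt_nonpos hT hY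
    (fun t => by nlinarith [hdiss t, sq_nonneg (β * A t - γ * R t)])
  have hv t : β * A t - γ * R t = 0 := by
    have h : (β + γ - K) * (β * A t - γ * R t) ^ 2 ≤ 0 := by linarith [hE0 t, hdiss t]
    exact pow_eq_zero_iff two_ne_zero |>.mp
      (le_antisymm (nonpos_of_mul_nonpos_right h (by linarith)) (sq_nonneg _))
  exact eq_of_mul_sub_mul_eq_zero β γ hβ.ne' hRode hv

/-- Bendixson--Dulac criterion applied to the mean-field system: if
`β + γ > α·c·sup F'`, then there is no nonconstant periodic orbit contained in
`D₁ = {(A,R) : 0 ≤ A, 0 ≤ R, A + R ≤ 1}`. -/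
theorem mean_field_no_periodic_orbit
    (α β γ c Q M : ℝ) (hα : 0 < α) (hβ : 0 < β) (hγ : 0 < γ)
    (F F' : ℝ → ℝ) (hF : ∀ y, HasDerivAt F (F' y) y)
    (hF0 : ∀ y, 0 ≤ F y) (hF1 : ∀ y, F y ≤ 1)
    (hF'0 : ∀ y, 0 ≤ F' y) (hMsup : IsLUB (Set.range F') M)
    (hcond : β + γ > α * c * M)
    (A R : ℝ → ℝ)
    (hAode : ∀ t, HasDerivAt A (-β * A t + α * F (c * A t + Q) * (1 - A t - R t)) t)
    (hRode : ∀ t, HasDerivAt R (-γ * R t + β * A t) t)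
    (hdom : ∀ t, 0 ≤ A t ∧ 0 ≤ R t ∧ A t + R t ≤ 1)
    (T : ℝ) (hT : 0 < T) (hper : ∀ t, A (t + T) = A t ∧ R (t + T) = R t) :
    ∀ t s : ℝ, A t = A s ∧ R t = R s :=
  mean_field_no_periodic_orbit_general α β γ c Q M hα hβ hγ F F' hF hF0 hF'0 hMsup hcond A R hAode
    hRode hdom T hT hper
end

section
/- For a single excitatory population with sigmoidal response F(y) = 1/(1 + exp(-(y-θ)/s)), the mean-field system A' = -β·A + α·F(c·A+Q)·(1-A-R), R' = -γ·R + β·A has no periodic orbit in D₁ = {(A,R) ∈ [0,1]² : A+R ≤ 1} whenever β + γ > α·c/(4s). -/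
/-!
Bendixson's criterion in disguise. Along a solution put `U = A'`; eliminating `R` with the first
equation turns the system into the Liénard equation `A'' + D·A' + g(A) = 0`, whose damping
`D = β + γ + α F(cA+Q) - α c F'(cA+Q) (1 - A - R)` is minus the divergence of the vector field.
On `D₁` we have `F ≥ 0`, `0 ≤ 1 - A - R ≤ 1` and `F' ≤ 1/(4s)`, so `D > 0`, and the energy
`A'²/2 + ∫₀^A g` has derivative `-D·A'² ≤ 0`. Being periodic it is constant, hence `A' ≡ 0`;
then `A` is constant and the first equation pins `R` as well.
-/

open Function Real

section Lienard

variable {A U D g : ℝ → ℝ} {T : ℝ}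

theorem Function.Periodic.eq_of_antitone {V : ℝ → ℝ} (hV : Periodic V T) (hT : 0 < T)
    (hanti : Antitone V) (t u : ℝ) : V t = V u := by
  wlog htu : t ≤ u generalizing t u
  · exact (this u t (le_of_not_ge htu)).symm
  obtain ⟨n, hn⟩ := exists_nat_ge ((u - t) / T)
  have hu : u ≤ t + n * T := by rw [div_le_iff₀ hT] at hn; linarith
  have hle : V t ≤ V u :=
    calc V t = V (t + n * T) := ((hV.nat_mul n) t).symm
      _ ≤ V u := hanti hu
  exact hle.antisymm (hanti htu)

/-- Energy of the Liénard equation `A'' + D A' + g(A) = 0` at position `a` and velocity `u`. -/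
noncomputable def lienardEnergy (g : ℝ → ℝ) (a u : ℝ) : ℝ := u ^ 2 / 2 + ∫ x in (0 : ℝ)..a, g x

theorem hasDerivAt_lienardEnergy (hA : ∀ t, HasDerivAt A (U t) t)
    (hU : ∀ t, HasDerivAt U (-D t * U t - g (A t)) t) (hg : Continuous g) (t : ℝ) :
    HasDerivAt (fun t => lienardEnergy g (A t) (U t)) (-D t * U t ^ 2) t := by
  have hG : HasDerivAt (fun t => ∫ x in (0 : ℝ)..A t, g x) (g (A t) * U t) t :=
    (hg.integral_hasStrictDerivAt 0 (A t)).hasDerivAt.comp t (hA t)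
  have hK := ((hU t).fun_pow 2).div_const 2
  exact (hK.add hG).congr_deriv (by push_cast; ring)

theorem lienard_velocity_eq_zero_of_periodic (hA : ∀ t, HasDerivAt A (U t) t)
    (hU : ∀ t, HasDerivAt U (-D t * U t - g (A t)) t) (hg : Continuous g) (hD : ∀ t, 0 < D t)
    (hAper : Periodic A T) (hUper : Periodic U T) (hT : 0 < T) (t : ℝ) : U t = 0 := by
  set E := fun t => lienardEnergy g (A t) (U t)
  have hE : ∀ t, HasDerivAt E (-D t * U t ^ 2) t := hasDerivAt_lienardEnergy hA hU hg
  have hEanti : Antitone E :=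
    antitone_of_deriv_nonpos (fun t => (hE t).differentiableAt) fun t => by
      rw [(hE t).deriv]
      exact mul_nonpos_of_nonpos_of_nonneg (neg_nonpos.2 (hD t).le) (sq_nonneg _)
  have hEper : Periodic E T := fun t => by simp only [E, hUper t, hAper t]
  have hEconst : E = fun _ => E 0 := funext fun t => hEper.eq_of_antitone hT hEanti t 0
  have hzero : -D t * U t ^ 2 = 0 := (hE t).unique (hEconst ▸ hasDerivAt_const t (E 0))
  simpa [(hD t).ne'] using hzero

end Lienard

section ExcitatoryPopulation

variable (α β γ c Q : ℝ) (F F' : ℝ → ℝ)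

def activityRate (a r : ℝ) : ℝ := -β * a + α * F (c * a + Q) * (1 - a - r)

/-- Minus the divergence of the vector field `(a, r) ↦ (activityRate a r, -γ r + β a)`. -/
def damping (a r : ℝ) : ℝ := β + γ + α * F (c * a + Q) - α * c * F' (c * a + Q) * (1 - a - r)

def restoringForce (a : ℝ) : ℝ := β * γ * a + α * F (c * a + Q) * (β * a - γ * (1 - a))

variable {α β γ c Q F F'}

theorem continuous_restoringForce (hF : Continuous F) :
    Continuous (restoringForce α β γ c Q F) := by
  unfold restoringForce
  fun_prop

theorem damping_pos (hα : 0 ≤ α) (hc : 0 ≤ c) {L : ℝ} (hF : ∀ y, 0 ≤ F y)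
    (hF' : ∀ y, F' y ≤ L) (hL : 0 ≤ L) (hcond : α * c * L < β + γ) {a r : ℝ} (ha : 0 ≤ a)
    (hr : 0 ≤ r) (har : a + r ≤ 1) : 0 < damping α β γ c Q F F' a r := by
  have hαc : 0 ≤ α * c := mul_nonneg hα hc
  have hslope : α * c * F' (c * a + Q) * (1 - a - r) ≤ α * c * L * (1 - a - r) := by
    gcongr
    · linarith
    · exact hF' _
  have hmass : α * c * L * (1 - a - r) ≤ α * c * L :=
    mul_le_of_le_one_right (mul_nonneg hαc hL) (by linarith)
  have hgain : 0 ≤ α * F (c * a + Q) := mul_nonneg hα (hF _)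
  unfold damping
  linarith

theorem hasDerivAt_activityRate {A R : ℝ → ℝ} (hF : ∀ y, HasDerivAt F (F' y) y)
    (hA : ∀ t, HasDerivAt A (activityRate α β c Q F (A t) (R t)) t)
    (hR : ∀ t, HasDerivAt R (-γ * R t + β * A t) t) (t : ℝ) :
    HasDerivAt (fun t => activityRate α β c Q F (A t) (R t))
      (-damping α β γ c Q F F' (A t) (R t) * activityRate α β c Q F (A t) (R t)
        - restoringForce α β γ c Q F (A t)) t := by
  have hFA := (hF (c * A t + Q)).comp t (((hA t).const_mul c).add_const Q)
  have hP := ((hasDerivAt_const t 1).sub (hA t)).sub (hR t)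
  refine (((hA t).const_mul (-β)).add ((hFA.const_mul α).mul hP)).congr_deriv ?_
  simp only [damping, restoringForce, activityRate, Pi.sub_apply, comp_apply]
  ring

theorem periodic_solution_const_of_slope_le (hα : 0 < α) (hc : 0 ≤ c) {L : ℝ}
    (hF : ∀ y, HasDerivAt F (F' y) y) (hFpos : ∀ y, 0 < F y) (hF' : ∀ y, F' y ≤ L) (hL : 0 ≤ L)
    (hcond : α * c * L < β + γ) {A R : ℝ → ℝ}
    (hA : ∀ t, HasDerivAt A (activityRate α β c Q F (A t) (R t)) t)
    (hR : ∀ t, HasDerivAt R (-γ * R t + β * A t) t)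
    (hdom : ∀ t, 0 ≤ A t ∧ 0 ≤ R t ∧ A t + R t ≤ 1) {T : ℝ} (hT : 0 < T)
    (hAper : Periodic A T) (hRper : Periodic R T) (t u : ℝ) : A t = A u ∧ R t = R u := by
  have hFcont : Continuous F := continuous_iff_continuousAt.2 fun y => (hF y).continuousAt
  have hrest : ∀ t, activityRate α β c Q F (A t) (R t) = 0 := by
    refine lienard_velocity_eq_zero_of_periodic hA (hasDerivAt_activityRate hF hA hR)
      (continuous_restoringForce hFcont) (fun t => ?_) hAper (fun t => ?_) hT
    · obtain ⟨ha, hr, har⟩ := hdom t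
      exact damping_pos hα.le hc (fun y => (hFpos y).le) hF' hL hcond ha hr har
    · simp only [hAper t, hRper t]
  have hAeq : A t = A u := is_const_of_deriv_eq_zero (fun x => (hA x).differentiableAt)
    (fun x => (hA x).deriv.trans (hrest x)) t u
  refine ⟨hAeq, ?_⟩
  have hgain : α * F (c * A u + Q) ≠ 0 := (mul_pos hα (hFpos _)).ne'
  have hRdiff : α * F (c * A u + Q) * (R u - R t) = 0 := by
    have ht := hrest t
    have hu := hrest u
    rw [activityRate, hAeq] at ht
    rw [activityRate] at hu
    linear_combination ht - hu
  linarith [(mul_eq_zero.1 hRdiff).resolve_left hgain]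

end ExcitatoryPopulation

theorem Real.sigmoid_mul_one_sub_le (x : ℝ) : sigmoid x * (1 - sigmoid x) ≤ 4⁻¹ := by
  nlinarith [sq_nonneg (sigmoid x - 2⁻¹)]

theorem sigmoid_no_periodic_orbit_general
    (α β γ c Q θ s : ℝ) (hα : 0 < α) (hc : 0 < c) (hs : 0 < s)
    (hcond : β + γ > α * c / (4 * s))
    (F : ℝ → ℝ) (hF : ∀ y, F y = 1 / (1 + Real.exp (-((y - θ) / s))))
    (A R : ℝ → ℝ)
    (hAode : ∀ t, HasDerivAt A (-β * A t + α * F (c * A t + Q) * (1 - A t - R t)) t)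
    (hRode : ∀ t, HasDerivAt R (-γ * R t + β * A t) t)
    (hdom : ∀ t, 0 ≤ A t ∧ 0 ≤ R t ∧ A t + R t ≤ 1)
    (T : ℝ) (hT : 0 < T) (hper : ∀ t, A (t + T) = A t ∧ R (t + T) = R t) :
    ∀ t u : ℝ, A t = A u ∧ R t = R u := by
  obtain rfl : F = fun y => sigmoid ((y - θ) / s) :=
    funext fun y => by rw [hF, sigmoid_def, one_div]
  have hFderiv : ∀ y, HasDerivAt (fun y => sigmoid ((y - θ) / s))
      (sigmoid ((y - θ) / s) * (1 - sigmoid ((y - θ) / s)) / s) y := fun y =>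
    ((hasDerivAt_sigmoid _).comp y (((hasDerivAt_id y).sub_const θ).div_const s)).congr_deriv
      (by simp only [id, div_eq_mul_inv]; ring)
  have hslope : ∀ y, sigmoid ((y - θ) / s) * (1 - sigmoid ((y - θ) / s)) / s ≤ 1 / (4 * s) :=
    fun y => calc
      _ ≤ 4⁻¹ / s := by gcongr; exact sigmoid_mul_one_sub_le _
      _ = 1 / (4 * s) := by ring
  exact periodic_solution_const_of_slope_le hα hc.le hFderiv (fun _ => sigmoid_pos _) hslope
    (by positivity) (by rwa [mul_one_div]) hAode hRode hdom hT (fun t => (hper t).1)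
    (fun t => (hper t).2)

/-- For a single excitatory population with logistic-sigmoid response, the mean-field
system has no nonconstant periodic orbit in `D₁` whenever `β + γ > α·c/(4s)`. -/
theorem sigmoid_no_periodic_orbit
    (α β γ c Q θ s : ℝ) (hα : 0 < α) (hβ : 0 < β) (hγ : 0 < γ) (hc : 0 < c) (hs : 0 < s)
    (hcond : β + γ > α * c / (4 * s))
    (F : ℝ → ℝ) (hF : ∀ y, F y = 1 / (1 + Real.exp (-((y - θ) / s))))
    (A R : ℝ → ℝ)
    (hAode : ∀ t, HasDerivAt A (-β * A t + α * F (c * A t + Q) * (1 - A t - R t)) t)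
    (hRode : ∀ t, HasDerivAt R (-γ * R t + β * A t) t)
    (hdom : ∀ t, 0 ≤ A t ∧ 0 ≤ R t ∧ A t + R t ≤ 1)
    (T : ℝ) (hT : 0 < T) (hper : ∀ t, A (t + T) = A t ∧ R (t + T) = R t) :
    ∀ t u : ℝ, A t = A u ∧ R t = R u :=
  sigmoid_no_periodic_orbit_general α β γ c Q θ s hα hc hs hcond F hF A R hAode hRode hdom T hT hper
end
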